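/- arXiv:2001.05669 — 2 statements merged into one kernel-verified Lean document; each statement's English description precedes it below -/
import Mathlib

section
/- Let A be an invertible alternating 2n × 2n complex matrix and B an alternating 2n × 2n complex matrix, and set R = B·A⁻¹. Then for every λ ∈ ℂ, the dimension of the eigenspace ker(R − λ·I) is even. In particular, every eigenvalue of R has even geometric multiplicity. -/
/-!
For every `λ`, `R - λ = (B - λA) A⁻¹` with `B - λA` again skew-symmetric, so the eigenspace
`ker (R - λ)` has dimension `2n - rank (B - λA)`. A skew-symmetric matrix has even rank: its
bilinear form restricts to a nondegenerate skew form on a complement of its kernel, and a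
skew-symmetric matrix of odd size has `det M = det Mᵀ = -det M`, hence is singular.
-/

open Matrix Module

theorem Matrix.det_eq_zero_of_transpose_eq_neg {R m : Type*} [CommRing R] [NoZeroDivisors R]
    [NeZero (2 : R)] [Fintype m] [DecidableEq m] {M : Matrix m m R} (hM : Mᵀ = -M)
    (hm : Odd (Fintype.card m)) : M.det = 0 := by
  have hdet : M.det = -M.det := by
    conv_lhs => rw [← det_transpose, hM, det_neg, hm.neg_one_pow, neg_one_mul]
  rw [eq_neg_iff_add_eq_zero, ← two_mul] at hdet
  exact (mul_eq_zero.mp hdet).resolve_left two_ne_zero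

namespace LinearMap.BilinForm

variable {K V : Type*} [Field K] [AddCommGroup V] [Module K V]

theorem even_finrank_of_nondegenerate_of_skew [NeZero (2 : K)] [FiniteDimensional K V]
    {B : LinearMap.BilinForm K V} (hB : B.Nondegenerate) (hskew : ∀ x y, B x y = -B y x) :
    Even (finrank K V) := by
  let b := finBasis K V
  have hskew_matrix : (toMatrix b B)ᵀ = -toMatrix b B := by
    ext i j
    simp only [transpose_apply, Matrix.neg_apply, toMatrix_apply, hskew (b j)]
  by_contra hodd
  rw [Nat.not_even_iff_odd, ← Fintype.card_fin (finrank K V)] at hodd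
  exact (nondegenerate_iff_det_ne_zero b).mp hB (det_eq_zero_of_transpose_eq_neg hskew_matrix hodd)

end LinearMap.BilinForm

namespace Matrix

variable {K m : Type*} [Field K] [Fintype m] [DecidableEq m]

theorem toBilin'_apply_eq_neg {M : Matrix m m K} (hM : Mᵀ = -M) (x y : m → K) :
    M.toBilin' x y = -M.toBilin' y x := by
  rw [toBilin'_apply', toBilin'_apply', dotProduct_mulVec, ← mulVec_transpose, hM, neg_mulVec,
    neg_dotProduct, dotProduct_comm]

theorem ker_toBilin'_of_transpose_eq_neg {M : Matrix m m K} (hM : Mᵀ = -M) :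
    LinearMap.ker M.toBilin' = LinearMap.ker M.mulVecLin := by
  ext x
  simp only [LinearMap.mem_ker, LinearMap.ext_iff, LinearMap.zero_apply, mulVecLin_apply]
  simp only [toBilin'_apply_eq_neg hM x, neg_eq_zero, toBilin'_apply', dotProduct_comm _ (M *ᵥ x)]
  exact dotProduct_eq_zero_iff

theorem even_rank_of_transpose_eq_neg [NeZero (2 : K)] {M : Matrix m m K} (hM : Mᵀ = -M) :
    Even M.rank := by
  obtain ⟨W, hW⟩ := (LinearMap.ker M.mulVecLin).exists_isCompl
  have hrank : M.rank = finrank K W := by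
    have hrank_nullity := LinearMap.finrank_range_add_finrank_ker M.mulVecLin
    have hcompl := Submodule.finrank_add_eq_of_isCompl hW
    rw [rank]
    omega
  have hnd : (M.toBilin'.restrict W).Nondegenerate := by
    refine .ofSeparatingLeft (LinearMap.separatingLeft_iff_ker_eq_bot.mpr ?_)
    rw [LinearMap.BilinForm.ker_restrict_eq_of_codisjoint hW.symm.codisjoint,
      ker_toBilin'_of_transpose_eq_neg hM, ← Submodule.disjoint_iff_comap_eq_bot]
    · exact hW.symm.disjoint
    · intro x _ y hy
      rw [toBilin'_apply', show M *ᵥ y = 0 from hy, dotProduct_zero]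
  rw [hrank]
  exact LinearMap.BilinForm.even_finrank_of_nondegenerate_of_skew hnd
    fun x y => toBilin'_apply_eq_neg hM x y

end Matrix

theorem Matrix.even_finrank_ker_mulVecLin_of_even_rank {K m n : Type*} [Field K] [Fintype n]
    {M : Matrix m n K} (hn : Even (Fintype.card n)) (hM : Even M.rank) :
    Even (finrank K (LinearMap.ker M.mulVecLin)) := by
  have hrank_nullity := LinearMap.finrank_range_add_finrank_ker M.mulVecLin
  rw [finrank_fintype_fun_eq_card, ← rank] at hrank_nullity
  exact (Nat.even_add.mp (hrank_nullity ▸ hn)).mp hM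

theorem recursion_operator_even_geometric_multiplicity_general
    (n : ℕ) (A B : Matrix (Fin (2 * n)) (Fin (2 * n)) ℂ)
    (hA : Aᵀ = -A) (hAinv : IsUnit A.det)
    (hB : Bᵀ = -B) :
    ∀ lam : ℂ,
      Even (Module.finrank ℂ
        (LinearMap.ker (Matrix.mulVecLin (B * A⁻¹ - lam • (1 : Matrix (Fin (2 * n)) (Fin (2 * n)) ℂ))))) := by
  intro lam
  have hpencil : (B - lam • A)ᵀ = -(B - lam • A) := by
    rw [transpose_sub, transpose_smul, hA, hB, smul_neg, neg_sub, sub_neg_eq_add, neg_add_eq_sub]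
  have hfactor : B * A⁻¹ - lam • 1 = (B - lam • A) * A⁻¹ := by
    rw [sub_mul, smul_mul, mul_nonsing_inv A hAinv]
  have hrank : ((B - lam • A) * A⁻¹).rank = (B - lam • A).rank :=
    rank_mul_eq_left_of_isUnit_det _ _ (isUnit_nonsing_inv_det A hAinv)
  rw [hfactor]
  refine even_finrank_ker_mulVecLin_of_even_rank (by simp) ?_
  exact hrank ▸ even_rank_of_transpose_eq_neg hpencil

/-- For an invertible alternating `2n × 2n` complex matrix `A` and an
alternating matrix `B`, every eigenvalue of `R = B·A⁻¹` has even geometric multiplicity. -/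
theorem recursion_operator_even_geometric_multiplicity
    (n : ℕ) (A B : Matrix (Fin (2 * n)) (Fin (2 * n)) ℂ)
    (hA : Aᵀ = -A) (hA0 : ∀ i, A i i = 0) (hAinv : IsUnit A.det)
    (hB : Bᵀ = -B) (hB0 : ∀ i, B i i = 0) :
    ∀ lam : ℂ,
      Even (Module.finrank ℂ
        (LinearMap.ker (Matrix.mulVecLin (B * A⁻¹ - lam • (1 : Matrix (Fin (2 * n)) (Fin (2 * n)) ℂ))))) :=
  recursion_operator_even_geometric_multiplicity_general n A B hA hAinv hB
end

section
/- Let V be a real vector space equipped with three endomorphisms I₁, I₂, I₃ satisfying I₁² = I₂² = I₃² = −id and I₁I₂ = I₃ = −I₂I₁ (quaternionic relations). Then an ℝ-linear endomorphism A of V satisfies I₁AI₁ + I₂AI₂ + I₃AI₃ = A if and only if A = I₁A₁ + I₂A₂ + I₃A₃ for some endomorphisms A₁, A₂, A₃ each of which commutes with I₁, I₂ and I₃. -/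
/-!
Averaging `X ↦ g X g⁻¹` over the quaternion group `{±1, ±i, ±j, ±k}` gives the projection
`Q X = ¼ (X - iXi - jXj - kXk)` onto the quaternionic elements, and `A` is aquaternionic exactly
when `Q A = 0`. Every `A` splits as `A = Q A + i Q(i⁻¹A) + j Q(j⁻¹A) + k Q(k⁻¹A)` (here `i⁻¹ = -i`),
while `Q` kills `iB`, `jB`, `kB` for quaternionic `B`; hence the aquaternionic `A` are exactly the
sums `i A₁ + j A₂ + k A₃` with quaternionic `Aₘ`. The relabelling `(i, j, k) ↦ (j, k, i)` preserves
the quaternion relations, so each computation only has to be done for `i`.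
-/

namespace QuaternionAlgebra.Basis

section CommRing

variable {𝕜 R : Type*} [CommRing 𝕜] [Ring R] [Algebra 𝕜 R] (q : Basis R (-1 : 𝕜) 0 (-1))

theorem i_mul_i_eq_neg_one : q.i * q.i = -1 := by simp

theorem j_mul_i_eq_neg_i_mul_j : q.j * q.i = -(q.i * q.j) := by simp

theorem i_mul_i_mul (x : R) : q.i * (q.i * x) = -x := by
  rw [← mul_assoc, i_mul_i_eq_neg_one, neg_one_mul]

theorem j_mul_j_mul (x : R) : q.j * (q.j * x) = -x := by
  simp [← mul_assoc]

theorem j_mul_i_mul (x : R) : q.j * (q.i * x) = -(q.i * (q.j * x)) := by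
  rw [← mul_assoc, j_mul_i_eq_neg_i_mul_j, neg_mul, mul_assoc]

def rotate : Basis R (-1 : 𝕜) 0 (-1) where
  i := q.j
  j := q.k
  k := q.i
  i_mul_i := by simp
  j_mul_j := by simp
  i_mul_j := by simp
  j_mul_i := by simp

@[simp] theorem rotate_i : q.rotate.i = q.j := rfl

@[simp] theorem rotate_j : q.rotate.j = q.k := rfl

@[simp] theorem rotate_k : q.rotate.k = q.i := rfl

def IsQuaternionic (B : R) : Prop := Commute B q.i ∧ Commute B q.j ∧ Commute B q.k

@[simp]
theorem isQuaternionic_rotate {B : R} : q.rotate.IsQuaternionic B ↔ q.IsQuaternionic B := by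
  simp only [IsQuaternionic, rotate_i, rotate_j, rotate_k]
  tauto

end CommRing

variable {𝕜 R : Type*} [Field 𝕜] [Ring R] [Algebra 𝕜 R] (q : Basis R (-1 : 𝕜) 0 (-1))

def quaternionicPart : R →ₗ[𝕜] R where
  toFun X := (4 : 𝕜)⁻¹ • (X - q.i * X * q.i - q.j * X * q.j - q.k * X * q.k)
  map_add' X Y := by simp only [mul_add, add_mul]; module
  map_smul' c X := by simp only [mul_smul_comm, smul_mul_assoc, RingHom.id_apply]; module

theorem quaternionicPart_apply (X : R) : q.quaternionicPart X =
    (4 : 𝕜)⁻¹ • (X - q.i * X * q.i - q.j * X * q.j - q.k * X * q.k) := rfl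

@[simp]
theorem quaternionicPart_rotate : q.rotate.quaternionicPart = q.quaternionicPart := by
  ext X
  simp only [quaternionicPart_apply, rotate_i, rotate_j, rotate_k]
  module

theorem commute_quaternionicPart_i (X : R) : Commute (q.quaternionicPart X) q.i := by
  simp only [Commute, SemiconjBy, quaternionicPart_apply, ← q.i_mul_j, mul_smul_comm,
    smul_mul_assoc, mul_sub, sub_mul, mul_assoc, i_mul_i_mul, i_mul_i_eq_neg_one,
    j_mul_i_eq_neg_i_mul_j, mul_neg, neg_neg, mul_one]
  module

theorem isQuaternionic_quaternionicPart (X : R) : q.IsQuaternionic (q.quaternionicPart X) :=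
  ⟨q.commute_quaternionicPart_i X, by simpa using q.rotate.commute_quaternionicPart_i X,
    by simpa using q.rotate.rotate.commute_quaternionicPart_i X⟩

theorem quaternionicPart_i_mul {B : R} (hB : q.IsQuaternionic B) :
    q.quaternionicPart (q.i * B) = 0 := by
  obtain ⟨hi, hj, -⟩ := hB
  simp only [quaternionicPart_apply, ← q.i_mul_j, mul_assoc, hi.eq, hj.eq, hi.left_comm, neg_mul,
    i_mul_i_mul, j_mul_j_mul, j_mul_i_mul, mul_neg, neg_neg]
  module

theorem i_mul_quaternionicPart_neg_i_mul (A : R) : q.i * q.quaternionicPart (-(q.i * A)) =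
    (4 : 𝕜)⁻¹ • (A - q.i * A * q.i + q.j * A * q.j + q.k * A * q.k) := by
  simp only [quaternionicPart_apply, ← q.i_mul_j, mul_smul_comm, mul_sub, mul_assoc, i_mul_i_mul,
    j_mul_i_mul, mul_neg, neg_mul, neg_neg]
  module

theorem quaternionicPart_add_sum_eq_self (h4 : (4 : 𝕜) ≠ 0) (A : R) :
    q.quaternionicPart A + q.i * q.quaternionicPart (-(q.i * A)) +
      q.j * q.quaternionicPart (-(q.j * A)) + q.k * q.quaternionicPart (-(q.k * A)) = A := by
  have hj := q.rotate.i_mul_quaternionicPart_neg_i_mul A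
  have hk := q.rotate.rotate.i_mul_quaternionicPart_neg_i_mul A
  simp only [rotate_i, rotate_j, rotate_k, quaternionicPart_rotate] at hj hk
  rw [quaternionicPart_apply, i_mul_quaternionicPart_neg_i_mul, hj, hk, ← smul_add, ← smul_add,
    ← smul_add]
  conv_rhs => rw [← inv_smul_smul₀ h4 A]
  congr 1
  module

theorem quaternionicPart_eq_zero_iff (h4 : (4 : 𝕜) ≠ 0) (A : R) :
    q.quaternionicPart A = 0 ↔ q.i * A * q.i + q.j * A * q.j + q.k * A * q.k = A := by
  rw [quaternionicPart_apply, smul_eq_zero_iff_right (inv_ne_zero h4), sub_sub, sub_sub,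
    ← add_assoc, sub_eq_zero, eq_comm]

theorem quaternionicPart_sum_eq_zero {A₁ A₂ A₃ : R} (h₁ : q.IsQuaternionic A₁)
    (h₂ : q.IsQuaternionic A₂) (h₃ : q.IsQuaternionic A₃) :
    q.quaternionicPart (q.i * A₁ + q.j * A₂ + q.k * A₃) = 0 := by
  have h₂' := q.rotate.quaternionicPart_i_mul (q.isQuaternionic_rotate.2 h₂)
  have h₃' := q.rotate.rotate.quaternionicPart_i_mul (by simpa using h₃)
  simp only [rotate_i, rotate_j, quaternionicPart_rotate] at h₂' h₃'
  rw [map_add, map_add, q.quaternionicPart_i_mul h₁, h₂', h₃', add_zero, add_zero]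

theorem aquaternionic_iff_exists_sum (h4 : (4 : 𝕜) ≠ 0) (A : R) :
    q.i * A * q.i + q.j * A * q.j + q.k * A * q.k = A ↔
      ∃ A₁ A₂ A₃ : R, q.IsQuaternionic A₁ ∧ q.IsQuaternionic A₂ ∧ q.IsQuaternionic A₃ ∧
        A = q.i * A₁ + q.j * A₂ + q.k * A₃ := by
  rw [← q.quaternionicPart_eq_zero_iff h4]
  constructor
  · intro hA
    refine ⟨q.quaternionicPart (-(q.i * A)), q.quaternionicPart (-(q.j * A)),
      q.quaternionicPart (-(q.k * A)), q.isQuaternionic_quaternionicPart _,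
      q.isQuaternionic_quaternionicPart _, q.isQuaternionic_quaternionicPart _, ?_⟩
    simpa only [hA, zero_add] using (q.quaternionicPart_add_sum_eq_self h4 A).symm
  · rintro ⟨A₁, A₂, A₃, h₁, h₂, h₃, rfl⟩
    exact q.quaternionicPart_sum_eq_zero h₁ h₂ h₃

end QuaternionAlgebra.Basis

theorem aquaternionic_iff_sum_of_quaternionic_general
    {V : Type*} [AddCommGroup V] [Module ℝ V]
    (I₁ I₂ I₃ : Module.End ℝ V)
    (h1 : I₁ * I₁ = -1) (h2 : I₂ * I₂ = -1)
    (h12 : I₁ * I₂ = I₃) (h21 : I₂ * I₁ = -I₃)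
    (A : Module.End ℝ V) :
    I₁ * A * I₁ + I₂ * A * I₂ + I₃ * A * I₃ = A ↔
      ∃ A₁ A₂ A₃ : Module.End ℝ V,
        (Commute A₁ I₁ ∧ Commute A₁ I₂ ∧ Commute A₁ I₃) ∧
        (Commute A₂ I₁ ∧ Commute A₂ I₂ ∧ Commute A₂ I₃) ∧
        (Commute A₃ I₁ ∧ Commute A₃ I₂ ∧ Commute A₃ I₃) ∧
        A = I₁ * A₁ + I₂ * A₂ + I₃ * A₃ := by
  let q : QuaternionAlgebra.Basis (Module.End ℝ V) (-1 : ℝ) 0 (-1) :=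
    { i := I₁, j := I₂, k := I₃
      i_mul_i := by simp [h1]
      j_mul_j := by simp [h2]
      i_mul_j := h12
      j_mul_i := by simp [h21] }
  exact q.aquaternionic_iff_exists_sum (by norm_num) A

/-- Haydys: on a vector space with a quaternionic structure `I₁, I₂, I₃`, an
endomorphism `A` satisfies `I₁AI₁ + I₂AI₂ + I₃AI₃ = A` (is aquaternionic) iff
`A = I₁A₁ + I₂A₂ + I₃A₃` with each `Aᵢ` commuting with `I₁, I₂, I₃` (quaternionic). -/
theorem aquaternionic_iff_sum_of_quaternionic
    {V : Type*} [AddCommGroup V] [Module ℝ V]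
    (I₁ I₂ I₃ : Module.End ℝ V)
    (h1 : I₁ * I₁ = -1) (h2 : I₂ * I₂ = -1) (h3 : I₃ * I₃ = -1)
    (h12 : I₁ * I₂ = I₃) (h21 : I₂ * I₁ = -I₃)
    (A : Module.End ℝ V) :
    I₁ * A * I₁ + I₂ * A * I₂ + I₃ * A * I₃ = A ↔
      ∃ A₁ A₂ A₃ : Module.End ℝ V,
        (Commute A₁ I₁ ∧ Commute A₁ I₂ ∧ Commute A₁ I₃) ∧
        (Commute A₂ I₁ ∧ Commute A₂ I₂ ∧ Commute A₂ I₃) ∧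
        (Commute A₃ I₁ ∧ Commute A₃ I₂ ∧ Commute A₃ I₃) ∧
        A = I₁ * A₁ + I₂ * A₂ + I₃ * A₃ :=
  aquaternionic_iff_sum_of_quaternionic_general I₁ I₂ I₃ h1 h2 h12 h21 A
end
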